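/- arXiv:1302.2638 — 2 statements merged into one kernel-verified Lean document; each statement's English description precedes it below -/
import Mathlib

section
/- Let n be a positive integer and let G be a 2n×2n random real matrix drawn from the real Ginibre ensemble. Then for every complex number z, E[det(z·I − G)·Tr(G)] = −2n·z^{2n−1}. Consequently the odd-degree skew orthogonal polynomial Q_{2n+1}(z) := z·E[det(z·I − G)] + E[det(z·I − G)·Tr(G)] equals z^{2n+1} − 2n·z^{2n−1}. -/
open MeasureTheory ProbabilityTheory Matrix

/-- The real Ginibre ensemble of size `N`: the probability measure on `N × N` real
matrices (viewed as functions `Fin N → Fin N → ℝ`) whose entries are independent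
standard real Gaussians `N(0,1)`. -/
noncomputable def ginibreReal (N : ℕ) : Measure (Fin N → Fin N → ℝ) :=
  Measure.pi fun _ => Measure.pi fun _ => gaussianReal 0 1

/-!
Expand `det (z I - G)` by the Leibniz formula and multiply by `∏ i ∈ D, G i i` for a set `D`
of diagonal positions (`D = ∅` for the determinant, `D = {k}` for the `k`-th summand of the
trace). Each term is a product of factors depending on one entry each, so its expectation is the
product of the expectations of the factors. If `σ ≠ 1` moves `i`, the off-diagonal entry
`G i (σ i)` occurs exactly once and to the first power, so the term has mean zero. For `σ = 1`
each diagonal entry contributes `E[z - x] = z`, or `E[(z - x) x] = -1` if it lies in `D`, so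
`E[det (z I - G) ∏ i ∈ D, G i i] = (-1)^|D| z^(N - |D|)`.
-/

section Moments

variable {μ : Measure ℝ}

-- The Bochner integral of a non-integrable function is `0`, so `∫ x ^ 2 = 1` forces integrability.
lemma integrable_sq_of_integral_sq_eq_one (hsq : ∫ x, x ^ 2 ∂μ = 1) :
    Integrable (fun x : ℝ => x ^ 2) μ :=
  .of_integral_ne_zero (by rw [hsq]; exact one_ne_zero)

lemma integrable_ofReal_of_integral_sq_eq_one [IsFiniteMeasure μ] (hsq : ∫ x, x ^ 2 ∂μ = 1) :
    Integrable (fun x : ℝ => (x : ℂ)) μ :=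
  ((memLp_two_iff_integrable_sq aestronglyMeasurable_id).2
    (integrable_sq_of_integral_sq_eq_one hsq)).integrable one_le_two |>.ofReal

lemma integrable_ofReal_sq_of_integral_sq_eq_one (hsq : ∫ x, x ^ 2 ∂μ = 1) :
    Integrable (fun x : ℝ => (x : ℂ) ^ 2) μ := by
  exact_mod_cast (integrable_sq_of_integral_sq_eq_one hsq).ofReal (𝕜 := ℂ)

lemma integral_ofReal_eq_zero (hmean : ∫ x, x ∂μ = 0) : ∫ x, (x : ℂ) ∂μ = 0 := by
  rw [integral_complex_ofReal, hmean, Complex.ofReal_zero]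

lemma integral_ofReal_sq (hsq : ∫ x, x ^ 2 ∂μ = 1) : ∫ x, (x : ℂ) ^ 2 ∂μ = 1 := by
  have h := integral_complex_ofReal (μ := μ) (f := fun x => x ^ 2)
  push_cast at h
  rw [h, hsq, Complex.ofReal_one]

lemma integrable_const_sub_ofReal [IsFiniteMeasure μ] (hsq : ∫ x, x ^ 2 ∂μ = 1) (c : ℂ) :
    Integrable (fun x : ℝ => c - x) μ :=
  (integrable_const c).sub (integrable_ofReal_of_integral_sq_eq_one hsq)

lemma integrable_const_sub_ofReal_mul_ofReal [IsFiniteMeasure μ] (hsq : ∫ x, x ^ 2 ∂μ = 1)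
    (c : ℂ) : Integrable (fun x : ℝ => (c - x) * x) μ :=
  ((integrable_ofReal_of_integral_sq_eq_one hsq).const_mul c).sub
    (integrable_ofReal_sq_of_integral_sq_eq_one hsq) |>.congr (ae_of_all _ fun x => by
      simp only [Pi.sub_apply]; ring)

variable [IsProbabilityMeasure μ]

lemma integral_const_sub_ofReal (hmean : ∫ x, x ∂μ = 0) (hsq : ∫ x, x ^ 2 ∂μ = 1) (c : ℂ) :
    ∫ x, (c - x) ∂μ = c := by
  rw [integral_sub (integrable_const c) (integrable_ofReal_of_integral_sq_eq_one hsq),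
    integral_ofReal_eq_zero hmean, integral_const, sub_zero, probReal_univ, one_smul]

lemma integral_const_sub_ofReal_mul_ofReal (hmean : ∫ x, x ∂μ = 0) (hsq : ∫ x, x ^ 2 ∂μ = 1)
    (c : ℂ) : ∫ x, (c - x) * x ∂μ = -1 := by
  simp_rw [sub_mul, ← sq]
  rw [integral_sub ((integrable_ofReal_of_integral_sq_eq_one hsq).const_mul c)
    (integrable_ofReal_sq_of_integral_sq_eq_one hsq), integral_const_mul,
    integral_ofReal_eq_zero hmean, integral_ofReal_sq hsq, mul_zero, zero_sub]

end Moments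

section MatrixFubini

variable {ι κ E 𝕜 : Type*} [Fintype ι] [Fintype κ] [MeasurableSpace E] [RCLike 𝕜]
  {μ : Measure E} [SigmaFinite μ]

theorem integral_prod_prod_apply_eq_prod_prod (f : ι → κ → E → 𝕜) :
    ∫ g, ∏ i, ∏ j, f i j (g i j) ∂(Measure.pi fun _ => Measure.pi fun _ => μ)
      = ∏ i, ∏ j, ∫ x, f i j x ∂μ := by
  rw [integral_fintype_prod_eq_prod (fun i (v : κ → E) => ∏ j, f i j (v j))]
  simp_rw [integral_fintype_prod_eq_prod]

theorem integrable_prod_prod_apply {f : ι → κ → E → 𝕜} (hf : ∀ i j, Integrable (f i j) μ) :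
    Integrable (fun g : ι → κ → E => ∏ i, ∏ j, f i j (g i j))
      (Measure.pi fun _ => Measure.pi fun _ => μ) :=
  Integrable.fintype_prod fun i => Integrable.fintype_prod (hf i)

end MatrixFubini

section Leibniz

variable {ι : Type*} [DecidableEq ι] {μ : Measure ℝ}

-- The factor through which the entry `x = G i j` enters the `σ`-term of the Leibniz expansion
-- of `det (z • 1 - G) * ∏ i ∈ D, G i i`.
noncomputable def leibnizEntry (z : ℂ) (σ : Equiv.Perm ι) (D : Finset ι) (i j : ι) (x : ℝ) : ℂ :=
  (if σ i = j then (if i = j then z else 0) - x else 1) * (if i = j ∧ i ∈ D then (x : ℂ) else 1)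

lemma integrable_leibnizEntry [IsFiniteMeasure μ] (hsq : ∫ x, x ^ 2 ∂μ = 1) (z : ℂ)
    (σ : Equiv.Perm ι) (D : Finset ι) (i j : ι) : Integrable (leibnizEntry z σ D i j) μ := by
  unfold leibnizEntry
  split_ifs <;> simp only [mul_one, one_mul, integrable_const,
    integrable_const_sub_ofReal_mul_ofReal hsq, integrable_const_sub_ofReal hsq,
    integrable_ofReal_of_integral_sq_eq_one hsq]

lemma integral_leibnizEntry [IsProbabilityMeasure μ] (hmean : ∫ x, x ∂μ = 0)
    (hsq : ∫ x, x ^ 2 ∂μ = 1) (z : ℂ) (σ : Equiv.Perm ι) (D : Finset ι) (i j : ι) :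
    ∫ x, leibnizEntry z σ D i j x ∂μ
      = if σ i = j then (if i = j ∧ i ∈ D then -1 else if i = j then z else 0)
        else if i = j ∧ i ∈ D then 0 else 1 := by
  unfold leibnizEntry
  split_ifs <;> simp only [mul_one, one_mul, integral_const_sub_ofReal hmean hsq,
    integral_const_sub_ofReal_mul_ofReal hmean hsq, integral_ofReal_eq_zero hmean,
    integral_const, probReal_univ, one_smul]

variable [Fintype ι]

lemma prod_leibnizEntry (z : ℂ) (σ : Equiv.Perm ι) (D : Finset ι) (i : ι) (v : ι → ℝ) :
    ∏ j, leibnizEntry z σ D i j (v j)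
      = ((if i = σ i then z else 0) - v (σ i)) * (if i ∈ D then (v i : ℂ) else 1) := by
  simp only [leibnizEntry, Finset.prod_mul_distrib, ite_and]
  rw [Finset.prod_ite_eq, Finset.prod_ite_eq]
  simp

lemma det_smul_one_sub_mul_prod_diag (z : ℂ) (D : Finset ι) (g : ι → ι → ℝ) :
    (z • (1 : Matrix ι ι ℂ) - (of g).map ((↑) : ℝ → ℂ)).det * ∏ i ∈ D, (g i i : ℂ)
      = ∑ σ : Equiv.Perm ι, (Equiv.Perm.sign σ : ℂ) * ∏ i, ∏ j, leibnizEntry z σ D i j (g i j) := by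
  rw [← det_transpose, det_apply', Finset.sum_mul]
  refine Finset.sum_congr rfl fun σ _ => ?_
  simp_rw [prod_leibnizEntry, Finset.prod_mul_distrib, Finset.prod_ite_mem, mul_assoc]
  simp [Matrix.one_apply]

lemma prod_integral_leibnizEntry_one [IsProbabilityMeasure μ] (hmean : ∫ x, x ∂μ = 0)
    (hsq : ∫ x, x ^ 2 ∂μ = 1) (z : ℂ) (D : Finset ι) (i : ι) :
    ∏ j, ∫ x, leibnizEntry z 1 D i j x ∂μ = if i ∈ D then -1 else z := by
  simp_rw [integral_leibnizEntry hmean hsq]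
  rw [Finset.prod_eq_single i (fun j _ hj => by simp [Ne.symm hj]) (by simp)]
  simp

lemma integral_prod_prod_leibnizEntry [IsProbabilityMeasure μ] (hmean : ∫ x, x ∂μ = 0)
    (hsq : ∫ x, x ^ 2 ∂μ = 1) (z : ℂ) (σ : Equiv.Perm ι) (D : Finset ι) :
    ∫ g, ∏ i, ∏ j, leibnizEntry z σ D i j (g i j) ∂(Measure.pi fun _ => Measure.pi fun _ => μ)
      = if σ = 1 then (-1) ^ D.card * z ^ (Fintype.card ι - D.card) else 0 := by
  rw [integral_prod_prod_apply_eq_prod_prod]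
  split_ifs with hσ
  · subst hσ
    simp_rw [prod_integral_leibnizEntry_one hmean hsq]
    rw [Finset.prod_ite, Finset.prod_const, Finset.prod_const, Finset.filter_mem_eq_inter,
      Finset.univ_inter, Finset.filter_notMem_eq_sdiff, Finset.card_univ_sdiff]
  · obtain ⟨i, hi⟩ : ∃ i, σ i ≠ i := by
      by_contra! h
      exact hσ (Equiv.ext h)
    refine Finset.prod_eq_zero (Finset.mem_univ i) (Finset.prod_eq_zero (Finset.mem_univ (σ i)) ?_)
    simp [integral_leibnizEntry hmean hsq, Ne.symm hi]

lemma integrable_det_smul_one_sub_mul_prod_diag [IsFiniteMeasure μ] (hsq : ∫ x, x ^ 2 ∂μ = 1)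
    (z : ℂ) (D : Finset ι) :
    Integrable (fun g : ι → ι → ℝ => (z • (1 : Matrix ι ι ℂ) - (of g).map ((↑) : ℝ → ℂ)).det
      * ∏ i ∈ D, (g i i : ℂ)) (Measure.pi fun _ => Measure.pi fun _ => μ) := by
  simp_rw [det_smul_one_sub_mul_prod_diag]
  exact integrable_finsetSum _ fun σ _ =>
    (integrable_prod_prod_apply fun i j => integrable_leibnizEntry hsq z σ D i j).const_mul _

lemma integral_det_smul_one_sub_mul_prod_diag [IsProbabilityMeasure μ] (hmean : ∫ x, x ∂μ = 0)
    (hsq : ∫ x, x ^ 2 ∂μ = 1) (z : ℂ) (D : Finset ι) :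
    ∫ g, (z • (1 : Matrix ι ι ℂ) - (of g).map ((↑) : ℝ → ℂ)).det * ∏ i ∈ D, (g i i : ℂ)
      ∂(Measure.pi fun _ => Measure.pi fun _ => μ)
      = (-1) ^ D.card * z ^ (Fintype.card ι - D.card) := by
  simp_rw [det_smul_one_sub_mul_prod_diag]
  rw [integral_finsetSum _ fun σ _ =>
    (integrable_prod_prod_apply fun i j => integrable_leibnizEntry hsq z σ D i j).const_mul _]
  simp_rw [integral_const_mul, integral_prod_prod_leibnizEntry hmean hsq]
  simp

lemma integral_det_smul_one_sub [IsProbabilityMeasure μ] (hmean : ∫ x, x ∂μ = 0)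
    (hsq : ∫ x, x ^ 2 ∂μ = 1) (z : ℂ) :
    ∫ g, (z • (1 : Matrix ι ι ℂ) - (of g).map ((↑) : ℝ → ℂ)).det
      ∂(Measure.pi fun _ => Measure.pi fun _ => μ) = z ^ Fintype.card ι := by
  simpa using integral_det_smul_one_sub_mul_prod_diag hmean hsq z ∅

lemma integral_det_smul_one_sub_mul_trace [IsProbabilityMeasure μ] (hmean : ∫ x, x ∂μ = 0)
    (hsq : ∫ x, x ^ 2 ∂μ = 1) (z : ℂ) :
    ∫ g, (z • (1 : Matrix ι ι ℂ) - (of g).map ((↑) : ℝ → ℂ)).det * ((of g).trace : ℂ)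
      ∂(Measure.pi fun _ => Measure.pi fun _ => μ)
      = -(Fintype.card ι : ℂ) * z ^ (Fintype.card ι - 1) := by
  have htrace (g : ι → ι → ℝ) : ((of g).trace : ℂ) = ∑ k, ∏ i ∈ {k}, (g i i : ℂ) := by
    simp [Matrix.trace]
  simp_rw [htrace, Finset.mul_sum]
  rw [integral_finsetSum _ fun k _ => integrable_det_smul_one_sub_mul_prod_diag hsq z {k}]
  simp_rw [integral_det_smul_one_sub_mul_prod_diag hmean hsq]
  simp

end Leibniz

lemma integral_sq_gaussianReal_zero (v : NNReal) : ∫ x, x ^ 2 ∂gaussianReal 0 v = v := by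
  rw [← variance_of_integral_eq_zero aemeasurable_id' integral_id_gaussianReal,
    variance_fun_id_gaussianReal]

theorem realGinibre_odd_skew_orthogonal_poly_general (n : ℕ) (z : ℂ) :
    (∫ g, (z • (1 : Matrix (Fin (2 * n)) (Fin (2 * n)) ℂ)
          - (Matrix.of g).map ((↑) : ℝ → ℂ)).det * ((Matrix.of g).trace : ℂ)
        ∂(ginibreReal (2 * n)))
      = -(2 * n : ℂ) * z ^ (2 * n - 1) ∧
    z * (∫ g, (z • (1 : Matrix (Fin (2 * n)) (Fin (2 * n)) ℂ)
          - (Matrix.of g).map ((↑) : ℝ → ℂ)).det ∂(ginibreReal (2 * n)))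
      + (∫ g, (z • (1 : Matrix (Fin (2 * n)) (Fin (2 * n)) ℂ)
          - (Matrix.of g).map ((↑) : ℝ → ℂ)).det * ((Matrix.of g).trace : ℂ)
        ∂(ginibreReal (2 * n)))
      = z ^ (2 * n + 1) - (2 * n : ℂ) * z ^ (2 * n - 1) := by
  have hmean : ∫ x, x ∂gaussianReal 0 1 = 0 := integral_id_gaussianReal
  have hsq : ∫ x, x ^ 2 ∂gaussianReal 0 1 = 1 := by simpa using integral_sq_gaussianReal_zero 1
  have hdet := integral_det_smul_one_sub (ι := Fin (2 * n)) hmean hsq z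
  have htrace := integral_det_smul_one_sub_mul_trace (ι := Fin (2 * n)) hmean hsq z
  simp only [Fintype.card_fin, Nat.cast_mul, Nat.cast_ofNat] at hdet htrace
  unfold ginibreReal
  refine ⟨htrace, ?_⟩
  rw [hdet, htrace]
  ring

/-- For the real Ginibre ensemble of size `2n`:
`E[det (z I - G) ⬝ Tr G] = -2n z^(2n-1)`, and consequently the odd-degree skew
orthogonal polynomial `Q_{2n+1}(z) = z E[det (z I - G)] + E[det (z I - G) Tr G]`
equals `z^(2n+1) - 2n z^(2n-1)`. -/
theorem realGinibre_odd_skew_orthogonal_poly (n : ℕ) (hn : 0 < n) (z : ℂ) :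
    (∫ g, (z • (1 : Matrix (Fin (2 * n)) (Fin (2 * n)) ℂ)
          - (Matrix.of g).map ((↑) : ℝ → ℂ)).det * ((Matrix.of g).trace : ℂ)
        ∂(ginibreReal (2 * n)))
      = -(2 * n : ℂ) * z ^ (2 * n - 1) ∧
    z * (∫ g, (z • (1 : Matrix (Fin (2 * n)) (Fin (2 * n)) ℂ)
          - (Matrix.of g).map ((↑) : ℝ → ℂ)).det ∂(ginibreReal (2 * n)))
      + (∫ g, (z • (1 : Matrix (Fin (2 * n)) (Fin (2 * n)) ℂ)
          - (Matrix.of g).map ((↑) : ℝ → ℂ)).det * ((Matrix.of g).trace : ℂ)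
        ∂(ginibreReal (2 * n)))
      = z ^ (2 * n + 1) - (2 * n : ℂ) * z ^ (2 * n - 1) :=
  realGinibre_odd_skew_orthogonal_poly_general n z
end

section
/- Let n be a positive integer and let β₁, β₂ be real parameters with β₁ ≥ 0 and β₂ ≥ 0. For G drawn from the real anti-spherical ensemble of size 2n with parameters (β₁, β₂), and for every complex number z, ⟨det(z·I − G)⟩ = z^{2n}. -/
/-!
The weight depends on `G` only through `Gᵀ G`, so it is invariant under `G ↦ D G` for every
sign matrix `D = diag(±1)`, and these row sign flips preserve Lebesgue measure. Hence
`⟨det (z I - G)⟩` equals the average over all `2^N` sign patterns of `⟨det (z I - D G)⟩`.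
Since the determinant is multilinear in the rows, that average replaces the `i`-th row
`z eᵢ - dᵢ gᵢ` by its mean `z eᵢ`, which leaves `det (z I) = z^N`.
-/

open MeasureTheory Matrix

/-- The (unnormalized) density of the real anti-spherical ensemble of size `N` with
parameters `(β₁, β₂)`: `det(Gᵀ G)^{β₁} det(I - Gᵀ G)^{β₂}` on the set where
`I - Gᵀ G` is positive definite, and `0` elsewhere. -/
noncomputable def antiSphericalRealWeight (N : ℕ) (β₁ β₂ : ℝ) (g : Fin N → Fin N → ℝ) : ℝ :=
  Set.indicator {g' : Fin N → Fin N → ℝ | (1 - (Matrix.of g')ᵀ * Matrix.of g').PosDef}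
    (fun g' => ((Matrix.of g')ᵀ * Matrix.of g').det ^ β₁ *
      (1 - (Matrix.of g')ᵀ * Matrix.of g').det ^ β₂) g

theorem Matrix.isClosed_setOf_posSemidef {n : Type*} [Fintype n] :
    IsClosed {A : Matrix n n ℝ | A.PosSemidef} := by
  have hset : {A : Matrix n n ℝ | A.PosSemidef} =
      {A | Aᴴ = A} ∩ ⋂ x : n → ℝ, {A | 0 ≤ star x ⬝ᵥ (A *ᵥ x)} := by
    ext A
    simp [posSemidef_iff_dotProduct_mulVec, IsHermitian]
  rw [hset]
  refine (isClosed_eq continuous_id.matrix_conjTranspose continuous_id).inter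
    (isClosed_iInter fun x => isClosed_le continuous_const ?_)
  exact continuous_const.dotProduct (continuous_id.matrix_mulVec continuous_const)

theorem Matrix.sum_det_sub_units_smul_rows {n R : Type*} [Fintype n] [DecidableEq n]
    [CommRing R] (A B : Matrix n n R) :
    ∑ d : n → ℤˣ, (A - of fun i => d i • B i).det = 2 ^ Fintype.card n * A.det := by
  have hrow : ∀ i, ∑ s : ℤˣ, (A i - s • B i) = (2 : R) • A i := by
    intro i
    rw [Fintype.sum_eq_add 1 (-1) (by decide)
      fun s hs => ((Int.units_eq_one_or s).elim hs.1 hs.2).elim]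
    rw [one_smul, Units.neg_smul, one_smul, sub_neg_eq_add, two_smul]
    abel
  calc ∑ d : n → ℤˣ, (A - of fun i => d i • B i).det
      = detRowAlternating fun i => ∑ s : ℤˣ, (A i - s • B i) :=
        ((detRowAlternating : (n → R) [⋀^n]→ₗ[R] R).toMultilinearMap.map_sum
          fun i s => A i - s • B i).symm
    _ = 2 ^ Fintype.card n * A.det := by
        simp only [hrow]
        exact det_smul A 2

section AntiSpherical

variable {N : ℕ} {β₁ β₂ : ℝ}

def gramOf (g : Fin N → Fin N → ℝ) : Matrix (Fin N) (Fin N) ℝ := (of g)ᵀ * of g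

def antiSphericalSupport (N : ℕ) : Set (Fin N → Fin N → ℝ) := {g | (1 - gramOf g).PosDef}

noncomputable def antiSphericalDensity (N : ℕ) (β₁ β₂ : ℝ) (g : Fin N → Fin N → ℝ) : ℝ :=
  (gramOf g).det ^ β₁ * (1 - gramOf g).det ^ β₂

theorem antiSphericalRealWeight_eq_indicator :
    antiSphericalRealWeight N β₁ β₂ =
      (antiSphericalSupport N).indicator (antiSphericalDensity N β₁ β₂) := rfl

theorem det_gramOf (g : Fin N → Fin N → ℝ) : (gramOf g).det = (of g).det * (of g).det := by
  rw [gramOf, det_mul, det_transpose]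

theorem isHermitian_one_sub_gramOf (g : Fin N → Fin N → ℝ) : (1 - gramOf g).IsHermitian :=
  isHermitian_one.sub (isHermitian_iff_isSymm.2 (isSymm_transpose_mul_self (of g)))

theorem continuous_gramOf : Continuous (gramOf (N := N)) :=
  continuous_id.matrix_transpose.matrix_mul continuous_id

theorem continuous_antiSphericalDensity (hβ₁ : 0 ≤ β₁) (hβ₂ : 0 ≤ β₂) :
    Continuous (antiSphericalDensity N β₁ β₂) :=
  ((Real.continuous_rpow_const hβ₁).comp continuous_gramOf.matrix_det).mul
    ((Real.continuous_rpow_const hβ₂).comp (continuous_const.sub continuous_gramOf).matrix_det)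

theorem measurableSet_antiSphericalSupport : MeasurableSet (antiSphericalSupport N) := by
  have hcont : Continuous fun g : Fin N → Fin N → ℝ => 1 - gramOf g :=
    continuous_const.sub continuous_gramOf
  have hset : antiSphericalSupport N =
      (fun g => 1 - gramOf g) ⁻¹' {A | A.PosSemidef} ∩ {g | (1 - gramOf g).det ≠ 0} := by
    ext g
    exact ⟨fun h => ⟨h.posSemidef, h.det_pos.ne'⟩,
      fun ⟨hpsd, hdet⟩ => (PosSemidef.posDef_iff_det_ne_zero hpsd).2 hdet⟩
  rw [hset]
  exact (isClosed_setOf_posSemidef.preimage hcont).measurableSet.inter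
    (isOpen_compl_singleton.preimage hcont.matrix_det).measurableSet

theorem abs_le_one_of_mem_antiSphericalSupport {g : Fin N → Fin N → ℝ}
    (hg : g ∈ antiSphericalSupport N) (i j : Fin N) : |g i j| ≤ 1 := by
  have hdiag : 0 < 1 - ∑ k, g k j ^ 2 := by
    simpa [gramOf, mul_apply, sq] using hg.diag_pos (i := j)
  have hle : g i j ^ 2 ≤ ∑ k, g k j ^ 2 :=
    Finset.single_le_sum (f := fun k => g k j ^ 2) (fun k _ => sq_nonneg _) (Finset.mem_univ i)
  exact abs_le_one_iff_mul_self_le_one.2 (by nlinarith)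

theorem antiSphericalSupport_subset_closedBall :
    antiSphericalSupport N ⊆ Metric.closedBall 0 1 := fun g hg => by
  rw [mem_closedBall_zero_iff, pi_norm_le_iff_of_nonneg zero_le_one]
  exact fun i => (pi_norm_le_iff_of_nonneg zero_le_one).2 fun j =>
    abs_le_one_of_mem_antiSphericalSupport hg i j

theorem mem_antiSphericalSupport_of_sum_sq_lt_one {g : Fin N → Fin N → ℝ}
    (hg : ∑ i, ∑ j, g i j ^ 2 < 1) : g ∈ antiSphericalSupport N := by
  refine .of_dotProduct_mulVec_pos (isHermitian_one_sub_gramOf g) fun x hx => ?_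
  have hquad : star x ⬝ᵥ ((1 - gramOf g) *ᵥ x) = x ⬝ᵥ x - (of g *ᵥ x) ⬝ᵥ (of g *ᵥ x) := by
    rw [star_trivial, sub_mulVec, dotProduct_sub, one_mulVec, gramOf, ← mulVec_mulVec,
      dotProduct_mulVec, vecMul_transpose]
  have hx2 : 0 < x ⬝ᵥ x := by
    obtain ⟨j, hj⟩ := Function.ne_iff.1 hx
    exact Finset.sum_pos' (fun j _ => mul_self_nonneg _) ⟨j, Finset.mem_univ j, mul_self_pos.2 hj⟩
  have hcs : (of g *ᵥ x) ⬝ᵥ (of g *ᵥ x) ≤ (∑ i, ∑ j, g i j ^ 2) * x ⬝ᵥ x := by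
    simp only [dotProduct, mulVec, of_apply, Finset.sum_mul, ← sq]
    gcongr with i
    rw [← Finset.sum_mul]
    exact Finset.sum_mul_sq_le_sq_mul_sq Finset.univ (g i) x
  rw [hquad]
  nlinarith

theorem antiSphericalDensity_nonneg {g : Fin N → Fin N → ℝ} (hg : g ∈ antiSphericalSupport N) :
    0 ≤ antiSphericalDensity N β₁ β₂ g := by
  have hgram : 0 ≤ (gramOf g).det := det_gramOf g ▸ mul_self_nonneg _
  exact mul_nonneg (Real.rpow_nonneg hgram _) (Real.rpow_nonneg hg.det_pos.le _)

theorem antiSphericalRealWeight_nonneg (g : Fin N → Fin N → ℝ) :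
    0 ≤ antiSphericalRealWeight N β₁ β₂ g :=
  Set.indicator_nonneg (fun _ => antiSphericalDensity_nonneg) g

theorem integrable_antiSphericalRealWeight_smul {E : Type*} [NormedAddCommGroup E]
    [NormedSpace ℝ E] (hβ₁ : 0 ≤ β₁) (hβ₂ : 0 ≤ β₂) {F : (Fin N → Fin N → ℝ) → E}
    (hF : Continuous F) : Integrable fun g => antiSphericalRealWeight N β₁ β₂ g • F g := by
  have hind : (fun g => antiSphericalRealWeight N β₁ β₂ g • F g) =
      (antiSphericalSupport N).indicator fun g => antiSphericalDensity N β₁ β₂ g • F g := by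
    rw [antiSphericalRealWeight_eq_indicator, Set.indicator_smul_left]
  rw [hind, integrable_indicator_iff measurableSet_antiSphericalSupport]
  exact (((continuous_antiSphericalDensity hβ₁ hβ₂).smul hF).continuousOn.integrableOn_compact
    (isCompact_closedBall 0 1)).mono_set antiSphericalSupport_subset_closedBall

theorem antiSphericalRealWeight_pos_of_sum_sq_lt_one {g : Fin N → Fin N → ℝ}
    (hsq : ∑ i, ∑ j, g i j ^ 2 < 1) (hdet : (of g).det ≠ 0) :
    0 < antiSphericalRealWeight N β₁ β₂ g := by
  have hS := mem_antiSphericalSupport_of_sum_sq_lt_one hsq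
  have hgram : 0 < (gramOf g).det := det_gramOf g ▸ mul_self_pos.2 hdet
  rw [antiSphericalRealWeight_eq_indicator, Set.indicator_of_mem hS]
  exact mul_pos (Real.rpow_pos_of_pos hgram _) (Real.rpow_pos_of_pos hS.det_pos _)

theorem integral_antiSphericalRealWeight_pos (hβ₁ : 0 ≤ β₁) (hβ₂ : 0 ≤ β₂) :
    0 < ∫ g, antiSphericalRealWeight N β₁ β₂ g := by
  have hint : Integrable (antiSphericalRealWeight N β₁ β₂) := by
    simpa using integrable_antiSphericalRealWeight_smul hβ₁ hβ₂ (F := fun _ => (1 : ℝ))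
      continuous_const
  rw [integral_pos_iff_support_of_nonneg antiSphericalRealWeight_nonneg hint]
  set U : Set (Fin N → Fin N → ℝ) :=
    {g | ∑ i, ∑ j, g i j ^ 2 < 1} ∩ {g | (of g).det ≠ 0}
  have hU : IsOpen U :=
    (isOpen_lt (by fun_prop) continuous_const).inter
      (isOpen_compl_singleton.preimage (continuous_id.matrix_det))
  have hUne : U.Nonempty := by
    refine ⟨diagonal fun _ => 1 / ((N : ℝ) + 1), ?_, ?_⟩
    · change ∑ i, ∑ j, diagonal (fun _ => 1 / ((N : ℝ) + 1)) i j ^ 2 < 1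
      simp only [diagonal_apply, ite_pow, ne_eq, OfNat.ofNat_ne_zero, not_false_eq_true,
        zero_pow, Finset.sum_ite_eq, Finset.mem_univ, if_true, Finset.sum_const,
        Finset.card_univ, Fintype.card_fin, nsmul_eq_mul]
      rw [div_pow, one_pow, ← div_eq_mul_one_div, div_lt_one (by positivity)]
      nlinarith
    · change (diagonal fun _ => 1 / ((N : ℝ) + 1)).det ≠ 0
      rw [det_diagonal]
      exact Finset.prod_ne_zero_iff.2 fun _ _ => by positivity
  have hUsupp : U ⊆ Function.support (antiSphericalRealWeight N β₁ β₂) :=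
    fun g ⟨hsq, hdet⟩ => (antiSphericalRealWeight_pos_of_sum_sq_lt_one hsq hdet).ne'
  exact (hU.measure_pos volume hUne).trans_le (measure_mono hUsupp)

theorem gramOf_units_smul (d : Fin N → ℤˣ) (g : Fin N → Fin N → ℝ) :
    gramOf (d • g) = gramOf g := by
  ext a b
  simp only [gramOf, mul_apply, transpose_apply, of_apply, Pi.smul_apply', Pi.smul_apply,
    Units.smul_def, zsmul_eq_mul]
  refine Finset.sum_congr rfl fun i _ => ?_
  rcases Int.units_eq_one_or (d i) with h | h <;> simp [h]

theorem antiSphericalRealWeight_units_smul (d : Fin N → ℤˣ) (g : Fin N → Fin N → ℝ) :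
    antiSphericalRealWeight N β₁ β₂ (d • g) = antiSphericalRealWeight N β₁ β₂ g := by
  have hmem : d • g ∈ antiSphericalSupport N ↔ g ∈ antiSphericalSupport N := by
    change (1 - gramOf (d • g)).PosDef ↔ (1 - gramOf g).PosDef
    rw [gramOf_units_smul]
  have hdens : antiSphericalDensity N β₁ β₂ (d • g) = antiSphericalDensity N β₁ β₂ g := by
    rw [antiSphericalDensity, antiSphericalDensity, gramOf_units_smul]
  rw [antiSphericalRealWeight_eq_indicator]
  by_cases hg : g ∈ antiSphericalSupport N
  · rw [Set.indicator_of_mem hg, Set.indicator_of_mem (hmem.2 hg), hdens]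
  · rw [Set.indicator_of_notMem hg, Set.indicator_of_notMem (mt hmem.1 hg)]

theorem measurePreserving_units_smul_real (s : ℤˣ) :
    MeasurePreserving (fun x : ℝ => s • x) volume volume := by
  rcases Int.units_eq_one_or s with rfl | rfl
  · simp only [one_smul]
    exact MeasurePreserving.id volume
  · simpa using Measure.measurePreserving_neg volume

theorem measurePreserving_units_smul {ι κ : Type*} [Fintype ι] [Fintype κ] (d : ι → ℤˣ) :
    MeasurePreserving (fun g : ι → κ → ℝ => d • g) volume volume :=
  volume_preserving_pi fun i =>
    volume_preserving_pi fun _ => measurePreserving_units_smul_real (d i)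

theorem integral_antiSphericalRealWeight_smul_comp_units_smul {E : Type*} [NormedAddCommGroup E]
    [NormedSpace ℝ E] (d : Fin N → ℤˣ) (F : (Fin N → Fin N → ℝ) → E) :
    ∫ g, antiSphericalRealWeight N β₁ β₂ g • F (d • g) =
      ∫ g, antiSphericalRealWeight N β₁ β₂ g • F g := by
  have h := (measurePreserving_units_smul d).integral_comp' (f := MeasurableEquiv.smul d)
    fun g => antiSphericalRealWeight N β₁ β₂ g • F g
  simpa only [MeasurableEquiv.smul_apply, antiSphericalRealWeight_units_smul] using h

theorem integral_antiSphericalRealWeight_smul_sum_units_smul {E : Type*} [NormedAddCommGroup E]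
    [NormedSpace ℝ E] (hβ₁ : 0 ≤ β₁) (hβ₂ : 0 ≤ β₂) {F : (Fin N → Fin N → ℝ) → E}
    (hF : Continuous F) :
    ∫ g, antiSphericalRealWeight N β₁ β₂ g • ∑ d : Fin N → ℤˣ, F (d • g) =
      (2 ^ N : ℝ) • ∫ g, antiSphericalRealWeight N β₁ β₂ g • F g := by
  simp_rw [Finset.smul_sum]
  rw [integral_finsetSum _ fun d _ => integrable_antiSphericalRealWeight_smul
    (F := fun g => F (d • g)) hβ₁ hβ₂ (hF.comp (continuous_const_smul d))]
  simp [integral_antiSphericalRealWeight_smul_comp_units_smul, ← Nat.cast_smul_eq_nsmul ℝ]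

theorem sum_det_smul_one_sub_units_smul (z : ℂ) (g : Fin N → Fin N → ℝ) :
    ∑ d : Fin N → ℤˣ, (z • (1 : Matrix (Fin N) (Fin N) ℂ) - (of (d • g)).map ((↑) : ℝ → ℂ)).det =
      2 ^ N * z ^ N := by
  have hrows (d : Fin N → ℤˣ) : (of (d • g)).map ((↑) : ℝ → ℂ) =
      of fun i => d i • (of g).map ((↑) : ℝ → ℂ) i := by
    ext i j
    simp [Units.smul_def]
  simp only [hrows, sum_det_sub_units_smul_rows, det_smul, det_one, Fintype.card_fin, mul_one]

end AntiSpherical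

theorem realAntiSpherical_even_skew_orthogonal_poly_general (n : ℕ)
    (β₁ β₂ : ℝ) (hβ₁ : 0 ≤ β₁) (hβ₂ : 0 ≤ β₂) (z : ℂ) :
    (∫ g : Fin (2 * n) → Fin (2 * n) → ℝ,
        (antiSphericalRealWeight (2 * n) β₁ β₂ g : ℂ) *
          (z • (1 : Matrix (Fin (2 * n)) (Fin (2 * n)) ℂ)
            - (Matrix.of g).map ((↑) : ℝ → ℂ)).det) /
      ((∫ g : Fin (2 * n) → Fin (2 * n) → ℝ, antiSphericalRealWeight (2 * n) β₁ β₂ g : ℝ) : ℂ)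
      = z ^ (2 * n) := by
  set N := 2 * n
  set P : (Fin N → Fin N → ℝ) → ℂ :=
    fun g => (z • (1 : Matrix (Fin N) (Fin N) ℂ) - (of g).map ((↑) : ℝ → ℂ)).det
  have hP : Continuous P :=
    (continuous_const.sub (continuous_id.matrix_map Complex.continuous_ofReal)).matrix_det
  have hsum (g : Fin N → Fin N → ℝ) : ∑ d : Fin N → ℤˣ, P (d • g) = 2 ^ N * z ^ N :=
    sum_det_smul_one_sub_units_smul z g
  have hnum : ∫ g, (antiSphericalRealWeight N β₁ β₂ g : ℂ) * P g =
      z ^ N * ((∫ g, antiSphericalRealWeight N β₁ β₂ g : ℝ) : ℂ) := by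
    have h := integral_antiSphericalRealWeight_smul_sum_units_smul hβ₁ hβ₂ hP
    simp_rw [hsum, integral_smul_const, Complex.real_smul] at h
    refine mul_left_cancel₀ (pow_ne_zero N two_ne_zero : (2 : ℂ) ^ N ≠ 0) ?_
    push_cast at h
    linear_combination -h
  rw [hnum, mul_div_assoc, div_self (Complex.ofReal_ne_zero.2
    (integral_antiSphericalRealWeight_pos hβ₁ hβ₂).ne'), mul_one]

/-- The even-degree skew orthogonal polynomial for the real anti-spherical ensemble:
`⟨det (z I - G)⟩ = z^(2n)`. -/
theorem realAntiSpherical_even_skew_orthogonal_poly (n : ℕ) (hn : 0 < n)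
    (β₁ β₂ : ℝ) (hβ₁ : 0 ≤ β₁) (hβ₂ : 0 ≤ β₂) (z : ℂ) :
    (∫ g : Fin (2 * n) → Fin (2 * n) → ℝ,
        (antiSphericalRealWeight (2 * n) β₁ β₂ g : ℂ) *
          (z • (1 : Matrix (Fin (2 * n)) (Fin (2 * n)) ℂ)
            - (Matrix.of g).map ((↑) : ℝ → ℂ)).det) /
      ((∫ g : Fin (2 * n) → Fin (2 * n) → ℝ, antiSphericalRealWeight (2 * n) β₁ β₂ g : ℝ) : ℂ)
      = z ^ (2 * n) :=
  realAntiSpherical_even_skew_orthogonal_poly_general n β₁ β₂ hβ₁ hβ₂ z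
end
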